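/- arXiv:1802.03928 — 6 statements merged into one kernel-verified Lean document; each statement's English description precedes it below -/
import Mathlib

section
/- If s¹ and s² are baseline schedules with the same permutation π and s¹_{π(k)} ≤ s²_{π(k)} for all k ≤ q, then the latest start times satisfy L(s¹)_{π(k)} ≤ L(s²)_{π(k)} for all k ≤ q. -/
/-- Length of the intersection of integer intervals [a1,b1] and [a2,b2]. -/
def lenint (a1 b1 a2 b2 : ℤ) : ℤ := max 0 (min b1 b2 - max a1 a2)

/-- Realised schedule: position-indexed recursive definition.
`p` processing times (operation-indexed), `π` permutation of operations,
`s` baseline start times (operation-indexed), `Δ` deviations (operation-indexed). -/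
def realised (p : ℕ → ℤ) (π : Equiv.Perm ℕ) (s Δ : ℕ → ℤ) : ℕ → ℤ
  | 0 => s (π 0) + Δ (π 0)
  | k + 1 => max (s (π (k + 1))) (realised p π s Δ k + p (π k)) + Δ (π (k + 1))

/-- Latest start time schedule (position-indexed). -/
def latest (p : ℕ → ℤ) (π : Equiv.Perm ℕ) (s : ℕ → ℤ) (Δmax : ℤ) : ℕ → ℤ :=
  realised p π s (fun _ => Δmax)

/-- A scenario: all deviations in {0,…,Δmax}. -/
def IsScenario (Δmax : ℤ) (Δ : ℕ → ℤ) : Prop := ∀ j, 0 ≤ Δ j ∧ Δ j ≤ Δmax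

/-- Auxiliary function for the right-shift schedule: `j` is the distance from
position `q`, i.e. the value at position `q - j`. -/
def rsAux (p : ℕ → ℤ) (π : Equiv.Perm ℕ) (L : ℕ → ℤ) (q : ℕ) (t : ℤ) : ℕ → ℤ
  | 0 => t
  | j + 1 => min (L (q - (j + 1))) (rsAux p π L q t j - p (π (q - (j + 1))))

/-- Right-shift schedule (position-indexed, meaningful for positions `k ≤ q`). -/
def rightShift (p : ℕ → ℤ) (π : Equiv.Perm ℕ) (L : ℕ → ℤ) (q : ℕ) (t : ℤ) (k : ℕ) : ℤ :=
  rsAux p π L q t (q - k)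

theorem latest_mono_baseline (p s₁ s₂ : ℕ → ℤ) (π : Equiv.Perm ℕ) (Δmax : ℤ)
    (hp : ∀ j, 0 < p j) (hΔmax : 0 ≤ Δmax) (q : ℕ)
    (h : ∀ k ≤ q, s₁ (π k) ≤ s₂ (π k)) :
    ∀ k ≤ q, latest p π s₁ Δmax k ≤ latest p π s₂ Δmax k := by
  intro k
  induction k with
  | zero => intro hk; simpa [latest, realised] using h 0 hk
  | succ n ih =>
    intro hk
    have h1 := ih (Nat.le_of_succ_le hk)
    have h2 := h (n + 1) hk
    simp only [latest, realised] at *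
    have := max_le_max h2 (add_le_add_right h1 (p (π n)))
    omega
end

section
/- In the right-shift schedule the fixed operation and all preceding operations start between their baseline and latest start times: for a baseline schedule s, position q, and time t with s_{π(q)} ≤ t ≤ L(s)_{π(q)}, the right-shift schedule Ŝ = RS(s,q,t) satisfies s_{π(k)} ≤ Ŝ_{π(k)} ≤ L(s)_{π(k)} for all k ≤ q. -/
theorem rightShift_between_baseline_and_latest (p s : ℕ → ℤ) (π : Equiv.Perm ℕ)
    (Δmax : ℤ) (hp : ∀ j, 0 < p j) (hΔmax : 0 ≤ Δmax)
    (hover : ∀ k, s (π k) + p (π k) ≤ s (π (k + 1)))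
    (q : ℕ) (t : ℤ) (ht₁ : s (π q) ≤ t) (ht₂ : t ≤ latest p π s Δmax q) :
    ∀ k ≤ q,
      s (π k) ≤ rightShift p π (latest p π s Δmax) q t k ∧
      rightShift p π (latest p π s Δmax) q t k ≤ latest p π s Δmax k := by
  have hsL : ∀ k, s (π k) ≤ latest p π s Δmax k := by
    intro k
    cases k with
    | zero => simp [latest, realised]; omega
    | succ n =>
      have := le_max_left (s (π (n + 1))) (latest p π s Δmax n + p (π n))
      simp only [latest, realised] at *
      omega
  have key : ∀ j ≤ q,
      s (π (q - j)) ≤ rsAux p π (latest p π s Δmax) q t j ∧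
      rsAux p π (latest p π s Δmax) q t j ≤ latest p π s Δmax (q - j) := by
    intro j
    induction j with
    | zero => intro _; simpa [rsAux] using ⟨ht₁, ht₂⟩
    | succ m ih =>
      intro hm
      have ih' := ih (by omega)
      have hqm : q - m = (q - (m + 1)) + 1 := by omega
      have hov := hover (q - (m + 1))
      rw [← hqm] at hov
      refine ⟨le_min (hsL _) ?_, min_le_left _ _⟩
      have h1 := ih'.1
      omega
  intro k hk
  have h := key (q - k) (by omega)
  have hqk : q - (q - k) = k := by omega
  rw [hqk] at h
  exact h
end

section
/- Every right-shift schedule is a realised schedule: for a baseline schedule s with permutation π, any position q, and any t with s_{π(q)} ≤ t ≤ L(s)_{π(q)}, there exists a scenario Δ ∈ {0,…,Δmax}^n such that R(s,Δ)_{π(k)} = RS(s,q,t)_{π(k)} for all k ≤ q. -/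
/-!
Read the right-shift schedule `r` as a target and give operation `π k` exactly the deviation
that makes it start at `r k`: the gap between `r k` and its earliest possible start
`max (s (π k)) (r (k - 1) + p (π (k - 1)))`. This gap is nonnegative because `r` respects the
baseline and the processing times. It is at most `Δmax` because `r (k - 1)` is the minimum of
`L (k - 1)` and `r k - p (π (k - 1))`: in the first case the earliest start is `L k - Δmax` while
`r k ≤ L k`, in the second it is `≥ r k`.
-/

section Schedules

variable (p : ℕ → ℤ) (π : Equiv.Perm ℕ) (s : ℕ → ℤ)

def requiredDeviation (r : ℕ → ℤ) : ℕ → ℤ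
  | 0 => r 0 - s (π 0)
  | k + 1 => r (k + 1) - max (s (π (k + 1))) (r k + p (π k))

theorem realised_eq_of_requiredDeviation {Δ r : ℕ → ℤ} {q : ℕ}
    (hΔ : ∀ k ≤ q, Δ (π k) = requiredDeviation p π s r k) :
    ∀ k ≤ q, realised p π s Δ k = r k := by
  intro k
  induction k with
  | zero =>
    intro hq
    simp only [realised, hΔ 0 hq, requiredDeviation]
    ring
  | succ k ih =>
    intro hk
    simp only [realised, hΔ (k + 1) hk, requiredDeviation, ih (by omega)]
    ring

theorem le_latest {Δmax : ℤ} (hΔmax : 0 ≤ Δmax) (k : ℕ) : s (π k) ≤ latest p π s Δmax k := by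
  cases k with
  | zero => simp only [latest, realised]; omega
  | succ k => simp only [latest, realised]; omega

theorem latest_succ (Δmax : ℤ) (k : ℕ) :
    latest p π s Δmax (k + 1) = max (s (π (k + 1))) (latest p π s Δmax k + p (π k)) + Δmax :=
  rfl

end Schedules

section RightShift

variable {p : ℕ → ℤ} {π : Equiv.Perm ℕ} {L : ℕ → ℤ} {q : ℕ} {t : ℤ}

@[simp]
theorem rightShift_self : rightShift p π L q t q = t := by
  simp [rightShift, rsAux]

theorem rightShift_of_lt {k : ℕ} (hk : k < q) :
    rightShift p π L q t k = min (L k) (rightShift p π L q t (k + 1) - p (π k)) := by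
  obtain ⟨j, hj⟩ : ∃ j, q - k = j + 1 := ⟨q - k - 1, by omega⟩
  have hk' : q - (j + 1) = k := by omega
  have hj' : q - (k + 1) = j := by omega
  rw [rightShift, hj, rsAux, hk', rightShift, hj']

theorem rightShift_le (ht : t ≤ L q) {k : ℕ} (hk : k ≤ q) : rightShift p π L q t k ≤ L k := by
  rcases hk.lt_or_eq with hk | rfl
  · rw [rightShift_of_lt hk]
    exact min_le_left _ _
  · simpa using ht

theorem rightShift_add_le {k : ℕ} (hk : k < q) :
    rightShift p π L q t k + p (π k) ≤ rightShift p π L q t (k + 1) := by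
  have := min_le_right (L k) (rightShift p π L q t (k + 1) - p (π k))
  rw [← rightShift_of_lt hk] at this
  omega

theorem le_rightShift {s : ℕ → ℤ} (hover : ∀ k, s (π k) + p (π k) ≤ s (π (k + 1)))
    (hsL : ∀ k, s (π k) ≤ L k) (ht : s (π q) ≤ t) {k : ℕ} (hk : k ≤ q) :
    s (π k) ≤ rightShift p π L q t k := by
  induction hk using Nat.decreasingInduction with
  | self => simpa using ht
  | of_succ k hk ih =>
    rw [rightShift_of_lt hk]
    have := hover k
    exact le_min (hsL k) (by omega)

end RightShift

section Bounds

variable {p s : ℕ → ℤ} {π : Equiv.Perm ℕ} {Δmax : ℤ} {q : ℕ} {t : ℤ}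

theorem requiredDeviation_rightShift_nonneg (hΔmax : 0 ≤ Δmax)
    (hover : ∀ k, s (π k) + p (π k) ≤ s (π (k + 1))) (ht : s (π q) ≤ t) {k : ℕ} (hk : k ≤ q) :
    0 ≤ requiredDeviation p π s (rightShift p π (latest p π s Δmax) q t) k := by
  have hs := le_rightShift hover (le_latest p π s hΔmax) ht hk
  cases k with
  | zero => simp only [requiredDeviation]; omega
  | succ k =>
    have := rightShift_add_le (p := p) (π := π) (L := latest p π s Δmax) (t := t)
      (Nat.succ_le_iff.mp hk)
    simp only [requiredDeviation]
    omega

theorem requiredDeviation_rightShift_le (hΔmax : 0 ≤ Δmax) (ht : t ≤ latest p π s Δmax q)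
    {k : ℕ} (hk : k ≤ q) :
    requiredDeviation p π s (rightShift p π (latest p π s Δmax) q t) k ≤ Δmax := by
  have hrL := rightShift_le (p := p) (π := π) ht hk
  cases k with
  | zero =>
    have hL0 : latest p π s Δmax 0 = s (π 0) + Δmax := rfl
    simp only [requiredDeviation]
    omega
  | succ k =>
    have hrec := rightShift_of_lt (p := p) (π := π) (L := latest p π s Δmax) (t := t) hk
    rw [latest_succ] at hrL
    simp only [requiredDeviation]
    omega

end Bounds

theorem rightShift_is_realised_general (p s : ℕ → ℤ) (π : Equiv.Perm ℕ)
    (Δmax : ℤ) (hΔmax : 0 ≤ Δmax)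
    (hover : ∀ k, s (π k) + p (π k) ≤ s (π (k + 1)))
    (q : ℕ) (t : ℤ) (ht₁ : s (π q) ≤ t) (ht₂ : t ≤ latest p π s Δmax q) :
    ∃ Δ : ℕ → ℤ, IsScenario Δmax Δ ∧
      ∀ k ≤ q, realised p π s Δ k = rightShift p π (latest p π s Δmax) q t k := by
  set δ := requiredDeviation p π s (rightShift p π (latest p π s Δmax) q t)
  refine ⟨fun j => if π.symm j ≤ q then δ (π.symm j) else 0, ?_, ?_⟩
  · intro j
    dsimp only
    split_ifs with hj
    · exact ⟨requiredDeviation_rightShift_nonneg hΔmax hover ht₁ hj,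
        requiredDeviation_rightShift_le hΔmax ht₂ hj⟩
    · exact ⟨le_rfl, hΔmax⟩
  · exact realised_eq_of_requiredDeviation p π s fun k hk => by simp [hk, δ]

theorem rightShift_is_realised (p s : ℕ → ℤ) (π : Equiv.Perm ℕ)
    (Δmax : ℤ) (hp : ∀ j, 0 < p j) (hΔmax : 0 ≤ Δmax)
    (hover : ∀ k, s (π k) + p (π k) ≤ s (π (k + 1)))
    (q : ℕ) (t : ℤ) (ht₁ : s (π q) ≤ t) (ht₂ : t ≤ latest p π s Δmax q) :
    ∃ Δ : ℕ → ℤ, IsScenario Δmax Δ ∧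
      ∀ k ≤ q, realised p π s Δ k = rightShift p π (latest p π s Δmax) q t k :=
  rightShift_is_realised_general p s π Δmax hΔmax hover q t ht₁ ht₂
end

section
/- If two schedules S¹, S² with the same permutation satisfy S¹_{π(q)} = S²_{π(q)} and S¹_{π(k)} ≤ S²_{π(k)} for all k < q, both are non-overlapping in permutation order, and M is a metering interval [m,e] with non-zero intersection with operation π(q) in S¹ (i.e., lenint([m,e],[S¹_{π(q)}, S¹_{π(q)}+p_{π(q)}]) > 0), then the total energy consumed in M satisfies Σ_{k=1}^{q} lenint([m,e],[S¹_{π(k)}, S¹_{π(k)}+p_{π(k)}])·P_{π(k)} ≤ Σ_{k=1}^{q} lenint([m,e],[S²_{π(k)}, S²_{π(k)}+p_{π(k)}])·P_{π(k)}. -/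
lemma chain_le (S : ℕ → ℤ) (pp : ℕ → ℤ) (hno : ∀ k < q', S k + pp k ≤ S (k+1))
    (hpp : ∀ j, 0 < pp j) : ∀ k < q', S k + pp k ≤ S q' := by
  induction q' with
  | zero => intro k hk; omega
  | succ n ih =>
    intro k hk
    have h1 : S n + pp n ≤ S (n+1) := hno n (Nat.lt_succ_self n)
    rcases Nat.lt_or_ge k n with h | h
    · have := ih (fun j hj => hno j (Nat.lt_succ_of_lt hj)) k h
      have := hpp n; omega
    · have : k = n := by omega
      subst this; exact h1

lemma lenint_mono (m e a a' pp : ℤ) (h : a ≤ a') (h1 : a + pp ≤ e) (h2 : a' + pp ≤ e) :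
    lenint m e a (a + pp) ≤ lenint m e a' (a' + pp) := by
  unfold lenint
  omega

theorem energy_dominance_of_pointwise_later (p : ℕ → ℤ) (P : ℕ → ℝ)
    (π : Equiv.Perm ℕ) (S₁ S₂ : ℕ → ℤ) (q : ℕ) (m e : ℤ)
    (hp : ∀ j, 0 < p j) (hP : ∀ j, 0 ≤ P j) (hme : m < e)
    (heq : S₁ (π q) = S₂ (π q)) (hle : ∀ k < q, S₁ (π k) ≤ S₂ (π k))
    (hno₁ : ∀ k < q, S₁ (π k) + p (π k) ≤ S₁ (π (k + 1)))
    (hno₂ : ∀ k < q, S₂ (π k) + p (π k) ≤ S₂ (π (k + 1)))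
    (hint : 0 < lenint m e (S₁ (π q)) (S₁ (π q) + p (π q))) :
    ∑ k ∈ Finset.range (q + 1),
        (lenint m e (S₁ (π k)) (S₁ (π k) + p (π k)) : ℝ) * P (π k) ≤
    ∑ k ∈ Finset.range (q + 1),
        (lenint m e (S₂ (π k)) (S₂ (π k) + p (π k)) : ℝ) * P (π k) := by
  have hqe : S₁ (π q) < e := by
    unfold lenint at hint; omega
  have hc1 : ∀ k < q, S₁ (π k) + p (π k) ≤ S₁ (π q) :=
    chain_le (q' := q) (fun k => S₁ (π k)) (fun k => p (π k)) hno₁ (fun j => hp _)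
  have hc2 : ∀ k < q, S₂ (π k) + p (π k) ≤ S₂ (π q) :=
    chain_le (q' := q) (fun k => S₂ (π k)) (fun k => p (π k)) hno₂ (fun j => hp _)
  apply Finset.sum_le_sum
  intro k hk
  rcases Nat.lt_or_ge k q with h | h
  · have hl := lenint_mono m e (S₁ (π k)) (S₂ (π k)) (p (π k)) (hle k h)
      (by have := hc1 k h; omega) (by have := hc2 k h; omega)
    exact mul_le_mul_of_nonneg_right (by exact_mod_cast hl) (hP _)
  · have : k = q := by simp at hk; omega
    subst this; rw [heq]
end

section
/- Optimality of the earliest-robust-start-time schedule: if s is a baseline schedule for permutation π in which every operation starts at its earliest robust baseline start time, and s* is any robust baseline schedule with the same permutation π respecting release times and no-overlap, then s_{π(k)} ≤ s*_{π(k)} for all k; consequently the total tardiness of s is at most that of s*. -/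
/-- `s_{π(q)}` is robust relative to the preceding baseline start times:
for every scenario and every metering interval `M_i = [i·D, (i+1)·D]`,
the total energy consumed in `M_i` by operations `π(0),…,π(q)` in the
realised schedule does not exceed the limit `E i`. -/
def prefixRobust (p : ℕ → ℤ) (P : ℕ → ℝ) (π : Equiv.Perm ℕ) (D : ℤ)
    (E : ℕ → ℝ) (Δmax : ℤ) (s : ℕ → ℤ) (q : ℕ) : Prop :=
  ∀ Δ : ℕ → ℤ, IsScenario Δmax Δ → ∀ i : ℕ,
    ∑ k ∈ Finset.range (q + 1),
      (lenint ((i : ℤ) * D) (((i : ℤ) + 1) * D) (realised p π s Δ k)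
        (realised p π s Δ k + p (π k)) : ℝ) * P (π k) ≤ E i

lemma realised_zero (p : ℕ → ℤ) (π : Equiv.Perm ℕ) (s Δ : ℕ → ℤ) :
    realised p π s Δ 0 = s (π 0) + Δ (π 0) := rfl

lemma realised_succ (p : ℕ → ℤ) (π : Equiv.Perm ℕ) (s Δ : ℕ → ℤ) (k : ℕ) :
    realised p π s Δ (k + 1)
      = max (s (π (k + 1))) (realised p π s Δ k + p (π k)) + Δ (π (k + 1)) := rfl

lemma realised_congr (p : ℕ → ℤ) (π : Equiv.Perm ℕ) {s1 s2 Δ1 Δ2 : ℕ → ℤ} :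
    ∀ k, (∀ j, j ≤ k → s1 (π j) = s2 (π j)) → (∀ j, j ≤ k → Δ1 (π j) = Δ2 (π j)) →
    realised p π s1 Δ1 k = realised p π s2 Δ2 k
  | 0, hs, hΔ => by
      rw [realised_zero, realised_zero, hs 0 le_rfl, hΔ 0 le_rfl]
  | k+1, hs, hΔ => by
      rw [realised_succ, realised_succ,
        realised_congr p π k (fun j hj => hs j (Nat.le_succ_of_le hj))
          (fun j hj => hΔ j (Nat.le_succ_of_le hj)),
        hs (k+1) le_rfl, hΔ (k+1) le_rfl]

lemma realised_mono (p : ℕ → ℤ) (π : Equiv.Perm ℕ) {s1 s2 Δ1 Δ2 : ℕ → ℤ} :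
    ∀ k, (∀ j, j ≤ k → s1 (π j) ≤ s2 (π j)) → (∀ j, j ≤ k → Δ1 (π j) ≤ Δ2 (π j)) →
    realised p π s1 Δ1 k ≤ realised p π s2 Δ2 k
  | 0, hs, hΔ => by
      rw [realised_zero, realised_zero]
      exact add_le_add (hs 0 le_rfl) (hΔ 0 le_rfl)
  | k+1, hs, hΔ => by
      rw [realised_succ, realised_succ]
      have := realised_mono p π k (fun j hj => hs j (Nat.le_succ_of_le hj))
          (fun j hj => hΔ j (Nat.le_succ_of_le hj))
      have h1 := hs (k+1) le_rfl
      have h2 := hΔ (k+1) le_rfl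
      omega

lemma realised_ge (p : ℕ → ℤ) (π : Equiv.Perm ℕ) (s Δ : ℕ → ℤ) (k : ℕ) :
    s (π k) + Δ (π k) ≤ realised p π s Δ k := by
  cases k with
  | zero => rw [realised_zero]
  | succ k => rw [realised_succ]; omega

lemma realised_step (p : ℕ → ℤ) (π : Equiv.Perm ℕ) (s Δ : ℕ → ℤ) (k : ℕ)
    (h : 0 ≤ Δ (π (k+1))) :
    realised p π s Δ k + p (π k) ≤ realised p π s Δ (k + 1) := by
  rw [realised_succ]; omega

lemma lenint_nonneg (a1 b1 a2 b2 : ℤ) : 0 ≤ lenint a1 b1 a2 b2 := le_max_left _ _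

lemma lenint_mono_s15 (a b x y c : ℤ) (h : x ≤ y) (h2 : y + c ≤ b) :
    lenint a b x (x + c) ≤ lenint a b y (y + c) := by
  unfold lenint; omega

lemma lenint_zero (a b x c : ℤ) (h : b ≤ x) : lenint a b x (x + c) = 0 := by
  unfold lenint; omega

theorem earliest_robust_schedule_is_optimal (n : ℕ) (hn : 0 < n)
    (p r d : ℕ → ℤ) (P : ℕ → ℝ) (π : Equiv.Perm ℕ) (D : ℤ) (E : ℕ → ℝ)
    (Δmax : ℤ) (s sstar : ℕ → ℤ)
    (hp : ∀ j, 0 < p j) (hP : ∀ j, 0 ≤ P j) (hD : 0 < D) (hΔmax : 0 ≤ Δmax)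
    -- s: every operation starts at its earliest robust baseline start time:
    (hrel : ∀ q < n, r (π q) ≤ s (π q))
    (hover : ∀ q, q + 1 < n → s (π q) + p (π q) ≤ s (π (q + 1)))
    (hrob : ∀ q < n, prefixRobust p P π D E Δmax s q)
    (hmin : ∀ q < n, ∀ t : ℤ, r (π q) ≤ t →
      (0 < q → s (π (q - 1)) + p (π (q - 1)) ≤ t) →
      prefixRobust p P π D E Δmax (Function.update s (π q) t) q →
      s (π q) ≤ t)
    -- sstar: any robust baseline schedule with the same permutation:
    (hrel' : ∀ q < n, r (π q) ≤ sstar (π q))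
    (hover' : ∀ q, q + 1 < n → sstar (π q) + p (π q) ≤ sstar (π (q + 1)))
    (hrob' : ∀ Δ : ℕ → ℤ, IsScenario Δmax Δ → ∀ i : ℕ,
      ∑ k ∈ Finset.range n,
        (lenint ((i : ℤ) * D) (((i : ℤ) + 1) * D) (realised p π sstar Δ k)
          (realised p π sstar Δ k + p (π k)) : ℝ) * P (π k) ≤ E i) :
    (∀ k < n, s (π k) ≤ sstar (π k)) ∧
    ∑ k ∈ Finset.range n, max 0 (s (π k) + p (π k) - d (π k)) ≤
      ∑ k ∈ Finset.range n, max 0 (sstar (π k) + p (π k) - d (π k)) := by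
  have hinj : ∀ j k : ℕ, j ≠ k → π j ≠ π k := fun j k h he => h (π.injective he)
  have key : ∀ q, q < n → s (π q) ≤ sstar (π q) := by
    intro q
    induction q using Nat.strong_induction_on with
    | _ q IH =>
      intro hq
      by_cases hts : s (π q) ≤ sstar (π q)
      · exact hts
      push_neg at hts
      refine hmin q hq (sstar (π q)) (hrel' q hq) ?_ ?_
      · intro hq0
        obtain ⟨m, rfl⟩ : ∃ m, q = m + 1 := ⟨q - 1, by omega⟩
        simp only [Nat.add_sub_cancel]
        have h1 := hover' m hq
        have h2 := IH m (by omega) (by omega)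
        omega
      · -- robustness of the updated schedule
        intro Δ hΔ i
        set s' : ℕ → ℤ := Function.update s (π q) (sstar (π q)) with hs'
        have hs'lt : ∀ j : ℕ, j ≠ q → s' (π j) = s (π j) := by
          intro j hj
          exact Function.update_of_ne (hinj j q hj) _ s
        have hs'q : s' (π q) = sstar (π q) := Function.update_self _ _ _
        rcases q with _ | m
        · -- q = 0 : a single operation, realise it in sstar
          set Δs : ℕ → ℤ := Function.update (fun _ => 0) (π 0) (Δ (π 0)) with hΔs
          have hsc : IsScenario Δmax Δs := by
            intro j
            by_cases hj : j = π 0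
            · subst hj
              rw [hΔs, Function.update_self]
              exact hΔ (π 0)
            · rw [hΔs, Function.update_of_ne hj]
              exact ⟨le_rfl, hΔmax⟩
          have h0 : realised p π sstar Δs 0 = realised p π s' Δ 0 := by
            rw [realised_zero, realised_zero, hs'q, hΔs, Function.update_self]
          have hsum := hrob' Δs hsc i
          refine le_trans (le_of_eq ?_)
            (le_trans (Finset.sum_le_sum_of_subset_of_nonneg
              (Finset.range_subset_range.mpr hn)
              (fun k _ _ => mul_nonneg (by exact_mod_cast lenint_nonneg _ _ _ _) (hP _))) hsum)
          refine Finset.sum_congr rfl ?_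
          intro k hk
          have : k = 0 := by simpa using hk
          subst this
          rw [h0]
        · -- q = m + 1
          have hRk : ∀ k, k ≤ m → realised p π s' Δ k = realised p π s Δ k := by
            intro k hk
            exact realised_congr p π k (fun j hj => hs'lt j (by omega)) (fun j _ => rfl)
          have hΔ1 : ∀ j, 0 ≤ Δ j := fun j => (hΔ j).1
          have hΔ2 : ∀ j, Δ j ≤ Δmax := fun j => (hΔ j).2
          set R : ℕ → ℤ := realised p π s Δ with hRdef
          set a : ℤ := max (sstar (π (m+1))) (R m + p (π m)) + Δ (π (m+1)) with ha
          have hs'q1 : realised p π s' Δ (m+1) = a := by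
            rw [realised_succ, hRk m le_rfl, hs'q]
          by_cases hA : max (s (π (m+1))) (R m + p (π m)) ≤ a
          · -- Case A : realise the shifted start within schedule s itself
            set b : ℤ := max (s (π (m+1))) (R m + p (π m)) with hb
            set Δ'' : ℕ → ℤ := Function.update Δ (π (m+1)) (a - b) with hΔ''
            have hsc : IsScenario Δmax Δ'' := by
              intro j
              by_cases hj : j = π (m+1)
              · subst hj
                rw [hΔ'', Function.update_self]
                have h1 := hΔ1 (π (m+1))
                have h2 := hΔ2 (π (m+1))
                constructor <;> omega
              · rw [hΔ'', Function.update_of_ne hj]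
                exact hΔ j
            have hRk'' : ∀ k, k ≤ m → realised p π s Δ'' k = R k := by
              intro k hk
              exact realised_congr p π k (fun j _ => rfl)
                (fun j hj => by rw [hΔ'', Function.update_of_ne (hinj j (m+1) (by omega))])
            have hq'' : realised p π s Δ'' (m+1) = a := by
              rw [realised_succ, hRk'' m le_rfl, hΔ'', Function.update_self]
              omega
            refine le_trans (le_of_eq (Finset.sum_congr rfl ?_)) (hrob (m+1) hq Δ'' hsc i)
            intro k hk
            have hk' := Finset.mem_range.mp hk
            by_cases h : k ≤ m
            · rw [hRk k h, hRk'' k h]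
            · have h2 : k = m + 1 := by omega
              subst h2
              rw [hs'q1, hq'']
          · -- Case B : a < s (π (m+1))
            push_neg at hA
            by_cases hB : ((i : ℤ) + 1) * D ≤ a
            · -- the shifted operation lies beyond the metering interval
              rw [Finset.sum_range_succ]
              have hz : lenint ((i:ℤ)*D) (((i:ℤ)+1)*D) (realised p π s' Δ (m+1))
                  (realised p π s' Δ (m+1) + p (π (m+1))) = 0 := by
                rw [hs'q1]; exact lenint_zero _ _ _ _ hB
              rw [hz]
              simp only [Int.cast_zero, zero_mul, add_zero]
              refine le_trans (le_of_eq (Finset.sum_congr rfl ?_)) (hrob m (by omega) Δ hΔ i)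
              intro k hk
              have hk' := Finset.mem_range.mp hk
              rw [hRk k (by omega)]
            · push_neg at hB
              -- Case B' : right-shift construction inside sstar
              set L : ℕ → ℤ := latest p π sstar Δmax with hLdef
              have hL0 : L 0 = sstar (π 0) + Δmax := by rw [hLdef]; rfl
              have hLs : ∀ k, L (k+1) = max (sstar (π (k+1))) (L k + p (π k)) + Δmax := by
                intro k; rw [hLdef]; rfl
              set RS : ℕ → ℤ := rightShift p π L (m+1) a with hRSdef
              have hRSq : RS (m+1) = a := by
                rw [hRSdef]
                show rsAux p π L (m+1) a ((m+1) - (m+1)) = a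
                rw [Nat.sub_self]
                rfl
              have hRSstep : ∀ k, k ≤ m → RS k = min (L k) (RS (k+1) - p (π k)) := by
                intro k hk
                rw [hRSdef]
                show rsAux p π L (m+1) a ((m+1) - k) = _
                have h1 : (m+1) - k = (m - k) + 1 := by omega
                rw [h1]
                show min (L ((m+1) - (m - k + 1)))
                  (rsAux p π L (m+1) a (m - k) - p (π ((m+1) - (m - k + 1)))) = _
                have h2 : (m+1) - (m - k + 1) = k := by omega
                have h3 : m - k = (m+1) - (k+1) := by omega
                rw [h2, h3]
                rfl
              have hRL : ∀ k, k ≤ m → R k ≤ L k := by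
                intro k hk
                rw [hRdef, hLdef]
                exact realised_mono p π k
                  (fun j hj => IH j (by omega) (by omega))
                  (fun j hj => hΔ2 _)
              have hsL : ∀ k, sstar (π k) ≤ L k := by
                intro k
                have h1 := realised_ge p π sstar (fun _ => Δmax) k
                rw [hLdef]
                show sstar (π k) ≤ realised p π sstar (fun _ => Δmax) k
                omega
              have down : ∀ j k, k ≤ m → m - k ≤ j →
                  R k ≤ RS k ∧ sstar (π k) ≤ RS k ∧ RS k + p (π k) ≤ a := by
                intro j
                induction j with
                | zero =>
                  intro k hk hj
                  have hkm : k = m := by omega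
                  rw [hkm]
                  have h1 := hRSstep m le_rfl
                  rw [hRSq] at h1
                  have h2 := hRL m le_rfl
                  have h3 := hsL m
                  have h4 := hΔ1 (π (m+1))
                  have h5 := hover' m hq
                  refine ⟨by omega, by omega, by omega⟩
                | succ j ihj =>
                  intro k hk hj
                  by_cases hj' : m - k ≤ j
                  · exact ihj k hk hj'
                  have hkm : k < m := by omega
                  obtain ⟨h1, h2, h3⟩ := ihj (k+1) (by omega) (by omega)
                  have h4 := hRSstep k (by omega)
                  have h5 := hRL k (by omega)
                  have h6 := hsL k
                  have h7 : R k + p (π k) ≤ R (k+1) := by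
                    rw [hRdef]
                    exact realised_step p π s Δ k (hΔ1 _)
                  have h8 := hover' k (by omega)
                  have h9 := hp (π (k+1))
                  refine ⟨by omega, by omega, by omega⟩
              -- the matching scenario for sstar
              set δ : ℕ → ℤ := fun k => if k = 0 then RS 0 - sstar (π 0)
                else if k ≤ m + 1 then RS k - max (sstar (π k)) (RS (k-1) + p (π (k-1)))
                else 0 with hδ
              set Δs : ℕ → ℤ := fun j => δ (π.symm j) with hΔs
              have hΔsπ : ∀ k, Δs (π k) = δ k := by
                intro k
                rw [hΔs]
                simp
              have hδ0 : δ 0 = RS 0 - sstar (π 0) := by simp [hδ]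
              have hδs : ∀ k, k + 1 ≤ m + 1 →
                  δ (k+1) = RS (k+1) - max (sstar (π (k+1))) (RS k + p (π k)) := by
                intro k hk
                simp only [hδ, Nat.add_sub_cancel]
                rw [if_neg (by omega : ¬(k + 1 = 0)), if_pos hk]
              have hδbig : ∀ k, ¬(k + 1 ≤ m + 1) → δ (k+1) = 0 := by
                intro k hk
                simp only [hδ]
                rw [if_neg (by omega : ¬(k + 1 = 0)), if_neg hk]
              have hreal : ∀ k, k ≤ m + 1 → realised p π sstar Δs k = RS k := by
                intro k
                induction k with
                | zero =>
                  intro _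
                  rw [realised_zero, hΔsπ 0, hδ0]
                  omega
                | succ k ihk =>
                  intro hk
                  rw [realised_succ, ihk (by omega), hΔsπ (k+1), hδs k hk]
                  omega
              have hδbound : ∀ k, 0 ≤ δ k ∧ δ k ≤ Δmax := by
                intro k
                rcases k with _ | k'
                · rw [hδ0]
                  have h1 := (down m 0 (by omega) (by omega)).2.1
                  have h2 := hRSstep 0 (by omega)
                  rw [hL0] at h2
                  constructor <;> omega
                · by_cases h1 : k' + 1 ≤ m + 1
                  · rw [hδs k' h1]
                    by_cases h2 : k' + 1 ≤ m
                    · have h3 := hRSstep (k'+1) h2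
                      have h4 := hRSstep k' (by omega)
                      have h5 := hLs k'
                      have h6 := (down m (k'+1) h2 (by omega)).2.1
                      constructor <;> omega
                    · have hk'm : k' = m := by omega
                      rw [hk'm, hRSq]
                      have h3 := (down m m le_rfl (by omega)).1
                      have h4 := (down m m le_rfl (by omega)).2.2
                      have h5 := hΔ2 (π (m+1))
                      have h6 := hΔ1 (π (m+1))
                      constructor <;> omega
                  · rw [hδbig k' h1]
                    exact ⟨le_rfl, hΔmax⟩
              have hsc : IsScenario Δmax Δs := by
                intro j
                rw [hΔs]
                exact hδbound _
              have hsum := hrob' Δs hsc i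
              refine le_trans (Finset.sum_le_sum ?_)
                (le_trans (Finset.sum_le_sum_of_subset_of_nonneg
                  (Finset.range_subset_range.mpr (by omega))
                  (fun k _ _ => mul_nonneg (by exact_mod_cast lenint_nonneg _ _ _ _) (hP _))) hsum)
              intro k hk
              have hk' := Finset.mem_range.mp hk
              by_cases h : k ≤ m
              · rw [hRk k h, hreal k (by omega)]
                refine mul_le_mul_of_nonneg_right ?_ (hP _)
                have h2 := (down m k h (by omega)).1
                have h3 := (down m k h (by omega)).2.2
                have h4 : RS k + p (π k) ≤ ((i:ℤ)+1) * D := by omega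
                exact_mod_cast lenint_mono_s15 _ _ _ _ _ h2 h4
              · have h2 : k = m + 1 := by omega
                subst h2
                rw [hs'q1, hreal (m+1) le_rfl, hRSq]
  refine ⟨key, Finset.sum_le_sum fun k hk => ?_⟩
  have h1 := key k (Finset.mem_range.mp hk)
  omega
end

section
/- Non-robustness of earlier start times (Case 1 jump): let s be a baseline schedule whose first q−1 operations start at robust start times, and suppose there exists a realised schedule R of s and a metering interval M_i such that the energy consumption of operations π(1),…,π(q) in M_i exceeds E_i and operation π(q−1) has non-zero intersection with M_i in R. Then every baseline start time of π(q) in the integer interval [s_{π(q−1)} + p_{π(q−1)}, R_{π(q)}] is not robust relative to s_{π(1)},…,s_{π(q−1)}. -/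
lemma realised_update_eq (p : ℕ → ℤ) (π : Equiv.Perm ℕ) (s Δ : ℕ → ℤ)
    (q : ℕ) (t d : ℤ) :
    ∀ k, k < q → realised p π (Function.update s (π q) t)
      (Function.update Δ (π q) d) k = realised p π s Δ k := by
  intro k
  induction k with
  | zero =>
    intro h
    have hne : π 0 ≠ π q := fun he => (Nat.ne_of_lt h) (π.injective he)
    simp [realised, Function.update_of_ne hne]
  | succ n ih =>
    intro h
    have hne : π (n + 1) ≠ π q := fun he => (Nat.ne_of_lt h) (π.injective he)
    simp [realised, Function.update_of_ne hne, ih (Nat.lt_of_succ_lt h)]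

lemma lenint_anti (m e u v c : ℤ) (hm : m ≤ u) (huv : u ≤ v) :
    lenint m e v (v + c) ≤ lenint m e u (u + c) := by
  unfold lenint; omega

theorem earlier_start_times_not_robust (p : ℕ → ℤ) (P : ℕ → ℝ)
    (π : Equiv.Perm ℕ) (D : ℤ) (E : ℕ → ℝ) (Δmax : ℤ) (s Δ : ℕ → ℤ)
    (q : ℕ) (hq : 1 ≤ q) (i : ℕ)
    (hp : ∀ j, 0 < p j) (hP : ∀ j, 0 ≤ P j) (hD : 0 < D) (hΔmax : 0 ≤ Δmax)
    -- the preceding operations start at robust start times: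
    (hprefix : prefixRobust p P π D E Δmax s (q - 1))
    -- a realised schedule violating the energy limit in M_i:
    (hΔ : IsScenario Δmax Δ)
    (hviol : E i < ∑ k ∈ Finset.range (q + 1),
      (lenint ((i : ℤ) * D) (((i : ℤ) + 1) * D) (realised p π s Δ k)
        (realised p π s Δ k + p (π k)) : ℝ) * P (π k))
    -- operation π(q−1) has non-zero intersection with M_i:
    (hint : 0 < lenint ((i : ℤ) * D) (((i : ℤ) + 1) * D)
      (realised p π s Δ (q - 1)) (realised p π s Δ (q - 1) + p (π (q - 1)))) :
    ∀ t : ℤ, s (π (q - 1)) + p (π (q - 1)) ≤ t → t ≤ realised p π s Δ q →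
      ¬ prefixRobust p P π D E Δmax (Function.update s (π q) t) q := by
  obtain ⟨q', rfl⟩ : ∃ q', q = q' + 1 := ⟨q - 1, (Nat.succ_pred_eq_of_pos hq).symm⟩
  simp only [Nat.add_sub_cancel] at *
  intro t ht1 ht2 hrob
  set m : ℤ := (i : ℤ) * D with hm
  set e : ℤ := ((i : ℤ) + 1) * D with he
  set Δ' : ℕ → ℤ := Function.update Δ (π (q' + 1)) 0 with hΔ'def
  have hΔ' : IsScenario Δmax Δ' := by
    intro j
    by_cases hj : j = π (q' + 1)
    · simp [hΔ'def, hj, hΔmax]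
    · simp [hΔ'def, Function.update_of_ne hj]; exact hΔ j
  have hkey := hrob Δ' hΔ' i
  -- abbreviations
  set A : ℤ := realised p π s Δ q' + p (π q') with hA
  have hRq : realised p π s Δ (q' + 1) = max (s (π (q' + 1))) A + Δ (π (q' + 1)) := rfl
  have hARq : A ≤ realised p π s Δ (q' + 1) := by
    have := (hΔ (π (q' + 1))).1
    rw [hRq]
    have : A ≤ max (s (π (q' + 1))) A := le_max_right _ _
    linarith [(hΔ (π (q' + 1))).1]
  -- realised of updated schedule
  have hupd : ∀ k, k < q' + 1 →
      realised p π (Function.update s (π (q' + 1)) t) Δ' k = realised p π s Δ k :=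
    realised_update_eq p π s Δ (q' + 1) t 0
  have hnew : realised p π (Function.update s (π (q' + 1)) t) Δ' (q' + 1)
      = max t A := by
    show max (Function.update s (π (q' + 1)) t (π (q' + 1)))
        (realised p π (Function.update s (π (q' + 1)) t) Δ' q' + p (π q'))
        + Δ' (π (q' + 1)) = max t A
    rw [Function.update_self, hupd q' (Nat.lt_succ_self q'), hΔ'def,
      Function.update_self, ← hA, add_zero]
  -- m ≤ A from hint
  have hmA : m ≤ A := by
    have h := hint
    unfold lenint at h
    omega
  have hmu : m ≤ max t A := le_trans hmA (le_max_right _ _)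
  have huv : max t A ≤ realised p π s Δ (q' + 1) := max_le ht2 hARq
  -- compare sums
  have hterm : (lenint m e (realised p π s Δ (q' + 1))
        (realised p π s Δ (q' + 1) + p (π (q' + 1))) : ℝ) * P (π (q' + 1))
      ≤ (lenint m e (realised p π (Function.update s (π (q' + 1)) t) Δ' (q' + 1))
        (realised p π (Function.update s (π (q' + 1)) t) Δ' (q' + 1) + p (π (q' + 1))) : ℝ)
        * P (π (q' + 1)) := by
    apply mul_le_mul_of_nonneg_right _ (hP _)
    rw [hnew]
    exact_mod_cast lenint_anti m e (max t A) (realised p π s Δ (q' + 1)) (p (π (q' + 1))) hmu huv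
  have hsum : ∑ k ∈ Finset.range (q' + 1 + 1),
      (lenint m e (realised p π s Δ k) (realised p π s Δ k + p (π k)) : ℝ) * P (π k)
      ≤ ∑ k ∈ Finset.range (q' + 1 + 1),
      (lenint m e (realised p π (Function.update s (π (q' + 1)) t) Δ' k)
        (realised p π (Function.update s (π (q' + 1)) t) Δ' k + p (π k)) : ℝ) * P (π k) := by
    apply Finset.sum_le_sum
    intro k hk
    rcases Nat.lt_succ_iff_lt_or_eq.mp (Finset.mem_range.mp hk) with h | h
    · rw [hupd k h]
    · subst h; exact hterm
  linarith
end
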